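/- arXiv:2509.08798 — 2 statements merged into one kernel-verified Lean document; each statement's English description precedes it below -/
import Mathlib

section
/- Let G = (V, E) be a finite simple graph. Each of the following properties is reconfiguration monotone increasing: being a global defensive alliance, being a global offensive alliance, and being a global powerful alliance. That is, if A and B both have the respective property and B is obtained from A by one token jumping step with v the unique vertex of B ∖ A, then A ∪ {v} also has that property. -/
open Finset

variable {V : Type*}

section Defs

variable [Fintype V] [DecidableEq V] (G : SimpleGraph V) [DecidableRel G.Adj]

/-- `NbrsIn G A v` is the number of neighbors of `v` lying in `A` (denoted `d_A(v)`). -/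
def NbrsIn (A : Finset V) (v : V) : ℕ := (A.filter (fun u => G.Adj v u)).card

/-- The boundary `∂A = N(A) ∖ A`: vertices outside `A` with a neighbor in `A`. -/
def Bdry (A : Finset V) : Finset V :=
  Finset.univ.filter (fun v => v ∉ A ∧ ∃ u ∈ A, G.Adj v u)

/-- `A` is a defensive alliance: `d_A(v) + 1 ≥ d_{V∖A}(v)` for every `v ∈ A`. -/
def DefAll (A : Finset V) : Prop := ∀ v ∈ A, NbrsIn G A v + 1 ≥ NbrsIn G Aᶜ v

/-- `A` is an offensive alliance: `d_A(v) ≥ d_{V∖A}(v) + 1` for every `v ∈ ∂A`. -/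
def OffAll (A : Finset V) : Prop := ∀ v ∈ Bdry G A, NbrsIn G A v ≥ NbrsIn G Aᶜ v + 1

/-- `A` is a powerful alliance: both a defensive and an offensive alliance. -/
def PowAll (A : Finset V) : Prop := DefAll G A ∧ OffAll G A

/-- `A` is a dominating set: every vertex is in `A` or has a neighbor in `A`. -/
def DomSet (A : Finset V) : Prop := ∀ v : V, v ∈ A ∨ ∃ u ∈ A, G.Adj v u

/-- `A` is an independent set. -/
def IndSet (A : Finset V) : Prop := ∀ u ∈ A, ∀ w ∈ A, ¬ G.Adj u w

/-- The set of leaves (vertices of degree one) of `G`. -/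
def Leaves : Finset V := Finset.univ.filter (fun v => G.degree v = 1)

/-- `Z(X) = {v ∈ V ∖ N[X] : N(v) ⊆ L ∪ ∂X}`. -/
def ZSet (X : Finset V) : Finset V :=
  Finset.univ.filter (fun v => v ∉ X ∧ (∀ u ∈ X, ¬ G.Adj v u) ∧
    G.neighborFinset v ⊆ Leaves G ∪ Bdry G X)

/-- `Y(X) = N[X] ∪ Z(X) ∪ L`. -/
def YSet (X : Finset V) : Finset V := (X ∪ Bdry G X) ∪ ZSet G X ∪ Leaves G

/-- Global independent offensive alliance: offensive alliance that is dominating and independent. -/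
def GIOA (A : Finset V) : Prop := OffAll G A ∧ DomSet G A ∧ IndSet G A

end Defs

/-- The induced subgraph `G^{≤r}` on vertices of degree at most `r` (modelled as a
graph on all of `V` whose edges are the edges of `G` with both endpoints of degree `≤ r`). -/
def GLE [Fintype V] (G : SimpleGraph V) [DecidableRel G.Adj] (r : ℕ) : SimpleGraph V where
  Adj u w := G.Adj u w ∧ G.degree u ≤ r ∧ G.degree w ≤ r
  symm := ⟨fun u w h => ⟨h.1.symm, h.2.2, h.2.1⟩⟩
  loopless := ⟨fun u h => G.irrefl h.1⟩

section Steps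

variable [DecidableEq V]

/-- Token jumping step: `|A| = |B|` and `|A ∖ B| = 1`. -/
def TJStep (A B : Finset V) : Prop := A.card = B.card ∧ (A \ B).card = 1

/-- Token addition step: `A ⊆ B` and `|B ∖ A| = 1`. -/
def TAStep (A B : Finset V) : Prop := A ⊆ B ∧ (B \ A).card = 1

/-- Token removal step: `B ⊆ A` and `|A ∖ B| = 1`. -/
def TRStep (A B : Finset V) : Prop := B ⊆ A ∧ (A \ B).card = 1

/-- Token addition/removal (TAR) step. -/
def TARStep (A B : Finset V) : Prop := TAStep A B ∨ TRStep A B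

/-- `f 0, f 1, …, f (n-1)` is a reconfiguration sequence (with `n` members, i.e. of
length `n`) from `A` to `B` for step relation `step`, all of whose members satisfy `X`. -/
def SeqOn (step : Finset V → Finset V → Prop) (X : Finset V → Prop)
    (f : ℕ → Finset V) (A B : Finset V) (n : ℕ) : Prop :=
  1 ≤ n ∧ f 0 = A ∧ f (n - 1) = B ∧
    (∀ i, i + 1 < n → step (f i) (f (i + 1))) ∧ (∀ i, i < n → X (f i))

/-- There is an `X`-`step` reconfiguration sequence of length `n` from `A` to `B`. -/
def IsSeq (step : Finset V → Finset V → Prop) (X : Finset V → Prop)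
    (A B : Finset V) (n : ℕ) : Prop :=
  ∃ f : ℕ → Finset V, SeqOn step X f A B n

/-- `X` is reconfiguration monotone increasing (rmi). -/
def Rmi (X : Finset V → Prop) : Prop :=
  ∀ A B : Finset V, X A → X B → TJStep A B → ∀ v ∈ B \ A, X (insert v A)

/-- `X` is reconfiguration monotone decreasing (rmd). -/
def Rmd (X : Finset V → Prop) : Prop :=
  ∀ A B : Finset V, X A → X B → TJStep A B → ∀ v ∈ A \ B, X (A.erase v)

end Steps

/-!
Each of the three properties is closed under binary unions: enlarging a set only adds neighbours
inside it and removes neighbours outside it, and the boundary of `A ∪ B` lies in `∂A ∪ ∂B`.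
A token jumping step from `A` to `B` with `B ∖ A = {v}` gives `A ∪ B = insert v A`.
-/

section Alliances

variable {V : Type*} {A B : Finset V}

lemma DomSet.mono {G : SimpleGraph V} (h : A ⊆ B) (hA : DomSet G A) : DomSet G B := fun v =>
  (hA v).imp (fun hv => h hv) fun ⟨u, hu, hadj⟩ => ⟨u, h hu, hadj⟩

variable (G : SimpleGraph V) [DecidableRel G.Adj]

lemma nbrsIn_mono (h : A ⊆ B) (v : V) : NbrsIn G A v ≤ NbrsIn G B v :=
  card_le_card (filter_subset_filter _ h)

variable [Fintype V] [DecidableEq V]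

lemma nbrsIn_compl_anti (h : A ⊆ B) (v : V) : NbrsIn G Bᶜ v ≤ NbrsIn G Aᶜ v :=
  nbrsIn_mono G (compl_subset_compl.mpr h) v

lemma defensive_of_subset (h : A ⊆ B) {v : V} (hv : NbrsIn G A v + 1 ≥ NbrsIn G Aᶜ v) :
    NbrsIn G B v + 1 ≥ NbrsIn G Bᶜ v := by
  have := nbrsIn_mono G h v
  have := nbrsIn_compl_anti G h v
  omega

lemma offensive_of_subset (h : A ⊆ B) {v : V} (hv : NbrsIn G A v ≥ NbrsIn G Aᶜ v + 1) :
    NbrsIn G B v ≥ NbrsIn G Bᶜ v + 1 := by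
  have := nbrsIn_mono G h v
  have := nbrsIn_compl_anti G h v
  omega

lemma bdry_union_subset : Bdry G (A ∪ B) ⊆ Bdry G A ∪ Bdry G B := by
  intro v hv
  simp only [Bdry, mem_union, mem_filter, mem_univ, true_and, not_or] at hv ⊢
  obtain ⟨⟨hvA, hvB⟩, u, hu | hu, hadj⟩ := hv
  · exact Or.inl ⟨hvA, u, hu, hadj⟩
  · exact Or.inr ⟨hvB, u, hu, hadj⟩

variable {G}

lemma DefAll.union (hA : DefAll G A) (hB : DefAll G B) : DefAll G (A ∪ B) := by
  intro v hv
  rcases mem_union.mp hv with hvA | hvB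
  · exact defensive_of_subset G subset_union_left (hA v hvA)
  · exact defensive_of_subset G subset_union_right (hB v hvB)

lemma OffAll.union (hA : OffAll G A) (hB : OffAll G B) : OffAll G (A ∪ B) := by
  intro v hv
  rcases mem_union.mp (bdry_union_subset G hv) with hvA | hvB
  · exact offensive_of_subset G subset_union_left (hA v hvA)
  · exact offensive_of_subset G subset_union_right (hB v hvB)

lemma PowAll.union (hA : PowAll G A) (hB : PowAll G B) : PowAll G (A ∪ B) :=
  ⟨hA.1.union hB.1, hA.2.union hB.2⟩

end Alliances

lemma TJStep.union_eq_insert {V : Type*} [DecidableEq V] {A B : Finset V} (hAB : TJStep A B)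
    {v : V} (hv : v ∈ B \ A) : A ∪ B = insert v A := by
  have hBA : B \ A = {v} := by
    obtain ⟨w, hw⟩ := card_eq_one.mp ((card_sdiff_comm hAB.1.symm).trans hAB.2)
    rw [hw, mem_singleton] at hv
    rw [hw, hv]
  rw [← union_sdiff_self_eq_union, hBA, union_comm, ← insert_eq]

lemma rmi_of_union_closed {V : Type*} [DecidableEq V] {X : Finset V → Prop}
    (hX : ∀ A B, X A → X B → X (A ∪ B)) : Rmi X := by
  intro A B hA hB hAB v hv
  rw [← hAB.union_eq_insert hv]
  exact hX A B hA hB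

theorem stmt_7 {V : Type*} [Fintype V] [DecidableEq V]
    (G : SimpleGraph V) [DecidableRel G.Adj] :
    Rmi (fun A : Finset V => DefAll G A ∧ DomSet G A) ∧
      Rmi (fun A : Finset V => OffAll G A ∧ DomSet G A) ∧
      Rmi (fun A : Finset V => PowAll G A ∧ DomSet G A) :=
  ⟨rmi_of_union_closed fun _ _ hA hB => ⟨hA.1.union hB.1, hA.2.mono subset_union_left⟩,
    rmi_of_union_closed fun _ _ hA hB => ⟨hA.1.union hB.1, hA.2.mono subset_union_left⟩,
    rmi_of_union_closed fun _ _ hA hB => ⟨hA.1.union hB.1, hA.2.mono subset_union_left⟩⟩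
end

section
/- Let G = (V, E) be a finite simple graph and let A ⊆ V be a global defensive alliance with |A| = k. Then |∂A| ≤ k² and |V| ≤ k + k². -/
open Finset

variable {V : Type*}

/-! A vertex of a defensive alliance `A` has fewer than `|A|` neighbours inside `A`, hence at most
`|A|` outside it; these outside neighbourhoods cover `∂A`, and domination gives `V = A ∪ ∂A`. -/

section Alliance

variable {G : SimpleGraph V} [DecidableRel G.Adj] {A : Finset V}

lemma nbrsIn_lt_card {v : V} (hv : v ∈ A) : NbrsIn G A v < A.card :=
  card_lt_card <| filter_ssubset.2 ⟨v, hv, G.irrefl⟩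

variable [Fintype V] [DecidableEq V]

lemma DefAll.nbrsIn_compl_le_card (hA : DefAll G A) {v : V} (hv : v ∈ A) :
    NbrsIn G Aᶜ v ≤ A.card := by
  have hdef := hA v hv
  have hin := nbrsIn_lt_card (G := G) hv
  omega

lemma bdry_subset_biUnion :
    Bdry G A ⊆ A.biUnion (fun u => Aᶜ.filter (G.Adj u)) := by
  intro v hv
  simp only [Bdry, mem_filter, mem_univ, true_and] at hv
  obtain ⟨hvA, u, hu, huv⟩ := hv
  exact mem_biUnion.2 ⟨u, hu, mem_filter.2 ⟨mem_compl.2 hvA, huv.symm⟩⟩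

lemma card_bdry_le_sum_nbrsIn_compl :
    (Bdry G A).card ≤ ∑ u ∈ A, NbrsIn G Aᶜ u :=
  (card_le_card bdry_subset_biUnion).trans card_biUnion_le

lemma DefAll.card_bdry_le_sq (hA : DefAll G A) : (Bdry G A).card ≤ A.card ^ 2 :=
  calc (Bdry G A).card ≤ ∑ u ∈ A, NbrsIn G Aᶜ u := card_bdry_le_sum_nbrsIn_compl
    _ ≤ ∑ _u ∈ A, A.card := sum_le_sum fun _ hu => hA.nbrsIn_compl_le_card hu
    _ = A.card ^ 2 := by rw [sum_const, smul_eq_mul, sq]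

lemma DomSet.univ_subset_union_bdry (hA : DomSet G A) :
    (univ : Finset V) ⊆ A ∪ Bdry G A := by
  intro v _
  by_cases hvA : v ∈ A
  · exact mem_union_left _ hvA
  · obtain ⟨u, hu, hvu⟩ := (hA v).resolve_left hvA
    exact mem_union_right _ (by simpa [Bdry] using ⟨hvA, u, hu, hvu⟩)

lemma DomSet.card_le_card_add_card_bdry (hA : DomSet G A) :
    Fintype.card V ≤ A.card + (Bdry G A).card :=
  (card_le_card hA.univ_subset_union_bdry).trans (card_union_le _ _)

end Alliance

theorem stmt_16 {V : Type*} [Fintype V] [DecidableEq V]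
    (G : SimpleGraph V) [DecidableRel G.Adj]
    (A : Finset V) (hAdef : DefAll G A) (hAdom : DomSet G A)
    (k : ℕ) (hk : A.card = k) :
    (Bdry G A).card ≤ k ^ 2 ∧ Fintype.card V ≤ k + k ^ 2 := by
  subst hk
  have hbdry := hAdef.card_bdry_le_sq
  exact ⟨hbdry, hAdom.card_le_card_add_card_bdry.trans (by omega)⟩
end
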